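/- arXiv:2201.10613 — 2 statements merged into one kernel-verified Lean document; each statement's English description precedes it below -/
import Mathlib

section
/- If A and B are nontrivial groups and N is a normal subgroup of A * B that is conjugate to a subgroup of A, then N is trivial. -/
open Monoid Monoid.Coprod

/-!
Since `N` is normal, `g N g⁻¹ = N`, so `N ≤ A`. If `inl a ∈ N` and `b ≠ 1` in `B`, then
`inr b * inl a * (inr b)⁻¹ ∈ N ≤ A`, and projecting to `A` shows that it equals `inl a`: so `inl a`
commutes with `inr b`. Now let `A` and `B` act on `A × B`, each by left multiplication on the fibre
over the identity of the other factor and trivially elsewhere. Then `inl a * inr b` sends `(1, 1)`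
to `(1, b)`, while `inr b * inl a` sends it to `(a, 1)`; hence `a = 1`.
-/

namespace Monoid.Coprod

variable {G H : Type*} [Group G] [Group H]

def mulLeftOnFstOfSndEqOne [DecidableEq H] : G →* Equiv.Perm (G × H) where
  toFun a :=
    { toFun := fun p => if p.2 = 1 then (a * p.1, p.2) else p
      invFun := fun p => if p.2 = 1 then (a⁻¹ * p.1, p.2) else p
      left_inv := fun ⟨x, y⟩ => by by_cases hy : y = 1 <;> simp [hy]
      right_inv := fun ⟨x, y⟩ => by by_cases hy : y = 1 <;> simp [hy] }
  map_one' := by ext p <;> by_cases hp : p.2 = 1 <;> simp [hp]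
  map_mul' a a' := by ext p <;> by_cases hp : p.2 = 1 <;> simp [hp, mul_assoc]

def mulLeftOnSndOfFstEqOne [DecidableEq G] : H →* Equiv.Perm (G × H) where
  toFun b :=
    { toFun := fun p => if p.1 = 1 then (p.1, b * p.2) else p
      invFun := fun p => if p.1 = 1 then (p.1, b⁻¹ * p.2) else p
      left_inv := fun ⟨x, y⟩ => by by_cases hx : x = 1 <;> simp [hx]
      right_inv := fun ⟨x, y⟩ => by by_cases hx : x = 1 <;> simp [hx] }
  map_one' := by ext p <;> by_cases hp : p.1 = 1 <;> simp [hp]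
  map_mul' b b' := by ext p <;> by_cases hp : p.1 = 1 <;> simp [hp, mul_assoc]

theorem not_commute_inl_inr {a : G} {b : H} (ha : a ≠ 1) (hb : b ≠ 1) :
    ¬Commute (inl a : G ∗ H) (inr b) := by
  classical
  intro hab
  have := congrArg (fun x => lift mulLeftOnFstOfSndEqOne mulLeftOnSndOfFstEqOne x (1, 1)) hab.eq
  simp [mulLeftOnFstOfSndEqOne, mulLeftOnSndOfFstEqOne, ha, hb] at this

theorem eq_bot_of_normal_le_range_inl [Nontrivial H] {N : Subgroup (G ∗ H)} [N.Normal]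
    (hN : N ≤ (inl : G →* G ∗ H).range) : N = ⊥ := by
  refine (Subgroup.eq_bot_iff_forall N).mpr fun x hx => ?_
  obtain ⟨a, rfl⟩ := hN hx
  obtain ⟨b, hb⟩ := exists_ne (1 : H)
  obtain ⟨a', ha'⟩ := hN (Subgroup.Normal.conj_mem ‹_› _ hx (inr b))
  obtain rfl : a = a' := by simpa using (congrArg fst ha').symm
  have ha : a = 1 :=
    by_contra fun ha => not_commute_inl_inr ha hb (eq_mul_inv_iff_mul_eq.mp ha')
  rw [ha, map_one]

end Monoid.Coprod

theorem normal_subgroup_conjugate_into_factor_eq_bot_general {A B : Type*} [Group A] [Group B]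
    [Nontrivial B] (N : Subgroup (A ∗ B)) [N.Normal]
    (g : A ∗ B) (h : N.map (MulAut.conj g).toMonoidHom ≤ (Coprod.inl : A →* A ∗ B).range) :
    N = ⊥ :=
  eq_bot_of_normal_le_range_inl (Subgroup.Normal.map_conj_eq N g ▸ h)

/-- A normal subgroup of a nontrivial free product which is conjugate into one factor is
trivial. -/
theorem normal_subgroup_conjugate_into_factor_eq_bot {A B : Type*} [Group A] [Group B]
    [Nontrivial A] [Nontrivial B] (N : Subgroup (A ∗ B)) [N.Normal]
    (g : A ∗ B) (h : N.map (MulAut.conj g).toMonoidHom ≤ (Coprod.inl : A →* A ∗ B).range) :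
    N = ⊥ :=
  normal_subgroup_conjugate_into_factor_eq_bot_general N g h
end

section
/- If a group G contains an infinite cyclic subgroup of finite index, then G has at most two ends and every finitely generated subgroup of infinite index in G is finite; in particular any normal subgroup N of G with G/N infinite is finite. -/
/-!
Every nontrivial subgroup of a cyclic group has finite index. If `C` is cyclic of finite index
in `G`, an infinite subgroup `H` meets `C` nontrivially (otherwise `H` would embed in the finite
set `G ⧸ C`), so `H ⊓ C` has finite index in `C`, hence in `G`, and so does `H`. Thus every
subgroup of infinite index is finite. The normal core of `C` is a normal, finite-index,
infinite cyclic subgroup.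
-/

open Subgroup

theorem IsCyclic.index_ne_zero_of_ne_bot {A : Type*} [Group A] [IsCyclic A] {K : Subgroup A}
    (hK : K ≠ ⊥) : K.index ≠ 0 := by
  obtain ⟨g, hg⟩ := IsCyclic.exists_generator (α := A)
  obtain ⟨⟨k, hkK⟩, hk1⟩ := ne_bot_iff_exists_ne_one.mp hK
  obtain ⟨n, rfl⟩ := mem_zpowers_iff.mp (hg k)
  have hn : n ≠ 0 := by rintro rfl; simp at hk1
  -- since `g ^ n ∈ K`, the coset of `g ^ m` is that of `g ^ (m % n)`
  have hsurj : Function.Surjective fun i : Set.Ico 0 |n| ↦ (g ^ (i : ℤ) : A ⧸ K) := by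
    rintro ⟨x⟩
    obtain ⟨m, rfl⟩ := mem_zpowers_iff.mp (hg x)
    refine ⟨⟨m % n, Int.emod_nonneg m hn, Int.emod_lt_abs m hn⟩, QuotientGroup.eq.mpr ?_⟩
    have hdiv : m - m % n = n * (m / n) := by rw [Int.emod_def]; ring
    rw [← zpow_neg, ← zpow_add, neg_add_eq_sub, hdiv, zpow_mul]
    exact zpow_mem hkK _
  have : Finite (A ⧸ K) := Finite.of_surjective _ hsurj
  exact index_ne_zero_of_finite

namespace Subgroup

variable {G : Type*} [Group G] {C H : Subgroup G}

theorem not_disjoint_of_infinite (hC : C.index ≠ 0) [Infinite H] : ¬Disjoint H C := by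
  intro hHC
  have : C.IsFiniteRelIndex H := isFiniteRelIndex_of_finiteIndex (h := ⟨hC⟩)
  apply relIndex_ne_zero (H := C) (K := H)
  rw [relIndex, subgroupOf_eq_bot.mpr hHC.symm, index_bot, Nat.card_eq_zero_of_infinite]

theorem index_ne_zero_of_not_disjoint [IsCyclic C] (hC : C.index ≠ 0) (hHC : ¬Disjoint H C) :
    H.index ≠ 0 := by
  have hHC : H.relIndex C ≠ 0 := IsCyclic.index_ne_zero_of_ne_bot (mt subgroupOf_eq_bot.mp hHC)
  rw [← relIndex_top_right] at hC ⊢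
  exact relIndex_ne_zero_trans hHC hC

theorem finite_of_index_eq_zero [IsCyclic C] (hC : C.index ≠ 0) (hH : H.index = 0) :
    Finite H := by
  by_contra hfin
  have : Infinite H := not_finite_iff_infinite.mp hfin
  exact index_ne_zero_of_not_disjoint hC (not_disjoint_of_infinite hC) hH

theorem exists_normal_index_ne_zero_mulEquiv_int [IsCyclic C] [Infinite C] (hC : C.index ≠ 0) :
    ∃ C' : Subgroup G, C'.Normal ∧ C'.index ≠ 0 ∧ Nonempty (C' ≃* Multiplicative ℤ) := by
  have : C.FiniteIndex := ⟨hC⟩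
  have : IsCyclic C.normalCore := isCyclic_of_le C.normalCore_le
  have : Infinite C.normalCore := by
    rw [← not_finite_iff_infinite]
    intro h
    have : Finite G := (finite_iff_finite_and_finiteIndex C.normalCore).mpr ⟨h, inferInstance⟩
    exact not_finite C
  exact ⟨C.normalCore, normalCore_normal C, FiniteIndex.index_ne_zero, ⟨intCyclicMulEquiv.symm⟩⟩

end Subgroup

/-- If `G` contains an infinite cyclic subgroup of finite index, then `G` has at most two
ends (equivalently, `G` is finite or contains a finite-index normal infinite cyclic
subgroup), every finitely generated subgroup of infinite index in `G` is finite, and any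
normal subgroup `N` with `G/N` infinite is finite. -/
theorem virtually_cyclic_structure {G : Type*} [Group G] (C : Subgroup G)
    (hfi : C.index ≠ 0) (hC : Nonempty (C ≃* Multiplicative ℤ)) :
    (Finite G ∨ ∃ C' : Subgroup G, C'.Normal ∧ C'.index ≠ 0 ∧
        Nonempty (C' ≃* Multiplicative ℤ)) ∧
    (∀ H : Subgroup G, H.FG → H.index = 0 → Finite H) ∧
    (∀ N : Subgroup G, N.Normal → Infinite (G ⧸ N) → Finite N) := by
  obtain ⟨e⟩ := hC
  have : IsCyclic C := e.isCyclic.mpr inferInstance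
  have : Infinite C := e.toEquiv.infinite_iff.mpr inferInstance
  refine ⟨.inr (exists_normal_index_ne_zero_mulEquiv_int hfi),
    fun H _ ↦ finite_of_index_eq_zero hfi, fun N _ hN ↦ ?_⟩
  exact finite_of_index_eq_zero hfi (index_eq_zero_iff_infinite.mpr hN)
end
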